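/- arXiv:1707.07092 — 3 statements merged into one kernel-verified Lean document; each statement's English description precedes it below -/
import Mathlib

section
/- Let n ≥ 1 and let E = (e_{ij}) be a symmetric real n×n matrix that is negative definite (i.e. xᵀEx < 0 for every nonzero x ∈ ℝⁿ) and satisfies e_{ij} ≥ 0 whenever i ≠ j. If a = (a_1, …, a_n) ∈ ℝⁿ is a row vector such that every entry of the row vector aE is ≥ 0, then a_i ≤ 0 for every 1 ≤ i ≤ n. -/
/-!
Write `a = a⁺ - a⁻`. Then `a⁺ E a⁺ = (a E) · a⁺ + a⁻ E a⁺`. The first term is nonnegative because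
`a E ≥ 0` and `a⁺ ≥ 0`; in the second, `a⁻` and `a⁺` have disjoint supports, so only the
off-diagonal entries of `E` contribute, and these are nonnegative. Hence `a⁺ E a⁺ ≥ 0`, which
negative definiteness allows only for `a⁺ = 0`, i.e. `a ≤ 0`.
-/

namespace Matrix

variable {ι R : Type*} [Fintype ι]

lemma dotProduct_mulVec_nonneg_of_disjoint [Semiring R] [PartialOrder R] [IsOrderedRing R]
    {E : Matrix ι ι R} (hE : ∀ i j, i ≠ j → 0 ≤ E i j) {x y : ι → R} (hx : 0 ≤ x) (hy : 0 ≤ y)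
    (hxy : ∀ i, x i = 0 ∨ y i = 0) : 0 ≤ x ⬝ᵥ E *ᵥ y := by
  refine Finset.sum_nonneg fun i _ => ?_
  obtain hxi | hyi := hxy i
  · simp [hxi]
  · refine mul_nonneg (hx i) (Finset.sum_nonneg fun j _ => ?_)
    obtain rfl | hij := eq_or_ne i j
    · simp [hyi]
    · exact mul_nonneg (hE i j hij) (hy j)

variable [Ring R] [LinearOrder R] [IsOrderedRing R]

lemma dotProduct_mulVec_posPart_nonneg {E : Matrix ι ι R} (hE : ∀ i j, i ≠ j → 0 ≤ E i j)
    {a : ι → R} (ha : 0 ≤ a ᵥ* E) : 0 ≤ a⁺ ⬝ᵥ E *ᵥ a⁺ := by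
  have hdecomp : a⁺ = a + a⁻ := eq_add_of_sub_eq (posPart_sub_negPart a)
  have hdisjoint : ∀ i, a⁻ i = 0 ∨ a⁺ i = 0 := fun i =>
    (le_total 0 (a i)).imp negPart_eq_zero.2 posPart_eq_zero.2
  calc 0 ≤ (a ᵥ* E) ⬝ᵥ a⁺ + a⁻ ⬝ᵥ E *ᵥ a⁺ :=
        add_nonneg (dotProduct_nonneg_of_nonneg ha (posPart_nonneg a))
          (dotProduct_mulVec_nonneg_of_disjoint hE (negPart_nonneg a) (posPart_nonneg a) hdisjoint)
    _ = a⁺ ⬝ᵥ E *ᵥ a⁺ := by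
        rw [dotProduct_mulVec a⁻, ← add_dotProduct, ← add_vecMul, ← hdecomp, ← dotProduct_mulVec]

theorem nonpos_of_nonneg_vecMul {E : Matrix ι ι R}
    (hnegdef : ∀ x : ι → R, x ≠ 0 → x ⬝ᵥ E *ᵥ x < 0) (hE : ∀ i j, i ≠ j → 0 ≤ E i j)
    {a : ι → R} (ha : 0 ≤ a ᵥ* E) : a ≤ 0 :=
  posPart_eq_zero.1 <| by_contra fun hpos =>
    (hnegdef _ hpos).not_ge (dotProduct_mulVec_posPart_nonneg hE ha)

end Matrix

theorem stmt_0_general (n : ℕ) (E : Matrix (Fin n) (Fin n) ℝ)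
    (hnegdef : ∀ x : Fin n → ℝ, x ≠ 0 → dotProduct x (E.mulVec x) < 0)
    (hoffdiag : ∀ i j : Fin n, i ≠ j → 0 ≤ E i j)
    (a : Fin n → ℝ)
    (ha : ∀ j : Fin n, 0 ≤ Matrix.vecMul a E j) :
    ∀ i : Fin n, a i ≤ 0 :=
  Matrix.nonpos_of_nonneg_vecMul hnegdef hoffdiag ha

/-- Lemma 2.18(1): Let `E` be a symmetric negative definite real `n × n` matrix with
nonnegative off-diagonal entries. If `a` is a row vector such that every entry of
the row vector `a * E` is nonnegative, then every entry of `a` is nonpositive. -/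
theorem stmt_0 (n : ℕ) (hn : 1 ≤ n) (E : Matrix (Fin n) (Fin n) ℝ)
    (hsymm : E.IsSymm)
    (hnegdef : ∀ x : Fin n → ℝ, x ≠ 0 → dotProduct x (E.mulVec x) < 0)
    (hoffdiag : ∀ i j : Fin n, i ≠ j → 0 ≤ E i j)
    (a : Fin n → ℝ)
    (ha : ∀ j : Fin n, 0 ≤ Matrix.vecMul a E j) :
    ∀ i : Fin n, a i ≤ 0 :=
  stmt_0_general n E hnegdef hoffdiag a ha
end

section
/- Let n ≥ 1 and let E = (e_{ij}) be a symmetric real n×n matrix that is negative definite (i.e. xᵀEx < 0 for every nonzero x ∈ ℝⁿ) and satisfies e_{ij} ≥ 0 whenever i ≠ j. Let λ = (λ_1, …, λ_n) ∈ ℝⁿ be a row vector such that every entry of the row vector λE is ≤ 0 and every entry of the row vector (𝟙 − λ)E is ≤ 0, where 𝟙 = (1, 1, …, 1) is the all-ones row vector. Then 0 ≤ λ_i ≤ 1 for every 1 ≤ i ≤ n. -/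
/-! A Metzler matrix `E` (off-diagonal entries `≥ 0`) that is negative definite is
"inverse-positive on the left": `x E ≤ 0` forces `x ≥ 0`. Indeed, split `x = x⁺ - x⁻`. Then
`x⁻ E x⁻ = x⁺ E x⁻ - x E x⁻`; the first term is `≥ 0` because `x⁺` and `x⁻` have disjoint
supports, so only off-diagonal entries of `E` contribute, and the second is `≤ 0` because
`x E ≤ 0` and `x⁻ ≥ 0`. Negative definiteness then forces `x⁻ = 0`. Applying this to `λ` and
to `𝟙 - λ` gives `0 ≤ λ ≤ 1`. -/

open Matrix

variable {ι R : Type*} [Fintype ι] [CommRing R] [LinearOrder R] [IsStrictOrderedRing R]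

theorem posPart_mul_negPart_eq_zero (a : R) : a⁺ * a⁻ = 0 := by
  rcases le_total a 0 with ha | ha
  · rw [posPart_eq_zero.mpr ha, zero_mul]
  · rw [negPart_eq_zero.mpr ha, mul_zero]

theorem Matrix.vecMul_dotProduct_nonneg_of_offDiag_nonneg {E : Matrix ι ι R}
    (hE : ∀ i j, i ≠ j → 0 ≤ E i j) {p y : ι → R} (hp : 0 ≤ p) (hy : 0 ≤ y)
    (hpy : ∀ i, p i * y i = 0) : 0 ≤ p ᵥ* E ⬝ᵥ y := by
  simp only [dotProduct, vecMul, Finset.sum_mul]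
  refine Finset.sum_nonneg fun j _ => Finset.sum_nonneg fun i _ => ?_
  rcases eq_or_ne i j with rfl | hij
  · rw [mul_right_comm, hpy i, zero_mul]
  · exact mul_nonneg (mul_nonneg (hp i) (hE i j hij)) (hy j)

theorem Matrix.nonneg_of_vecMul_nonpos {E : Matrix ι ι R}
    (hneg : ∀ x : ι → R, x ≠ 0 → x ⬝ᵥ E *ᵥ x < 0) (hE : ∀ i j, i ≠ j → 0 ≤ E i j)
    {x : ι → R} (hx : x ᵥ* E ≤ 0) : 0 ≤ x := by
  rw [← negPart_eq_zero]
  by_contra hne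
  have hdecomp : x ᵥ* E ⬝ᵥ x⁻ = x⁺ ᵥ* E ⬝ᵥ x⁻ - x⁻ ᵥ* E ⬝ᵥ x⁻ := by
    rw [← sub_dotProduct, ← sub_vecMul, posPart_sub_negPart]
  have hdef : x⁻ ᵥ* E ⬝ᵥ x⁻ < 0 := dotProduct_mulVec x⁻ E x⁻ ▸ hneg x⁻ hne
  have hcross : 0 ≤ x⁺ ᵥ* E ⬝ᵥ x⁻ :=
    vecMul_dotProduct_nonneg_of_offDiag_nonneg hE (posPart_nonneg x) (negPart_nonneg x)
      fun i => posPart_mul_negPart_eq_zero (x i)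
  have hx' : x ᵥ* E ⬝ᵥ x⁻ ≤ 0 :=
    Finset.sum_nonpos fun i _ => mul_nonpos_of_nonpos_of_nonneg (hx i) (negPart_nonneg (x i))
  linarith

theorem stmt_1_general (n : ℕ) (E : Matrix (Fin n) (Fin n) ℝ)
    (hnegdef : ∀ x : Fin n → ℝ, x ≠ 0 → dotProduct x (E.mulVec x) < 0)
    (hoffdiag : ∀ i j : Fin n, i ≠ j → 0 ≤ E i j)
    (lam : Fin n → ℝ)
    (hlam : ∀ j : Fin n, Matrix.vecMul lam E j ≤ 0)
    (hlam' : ∀ j : Fin n, Matrix.vecMul (fun i => 1 - lam i) E j ≤ 0) :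
    ∀ i : Fin n, 0 ≤ lam i ∧ lam i ≤ 1 := fun i =>
  ⟨nonneg_of_vecMul_nonpos hnegdef hoffdiag hlam i,
    sub_nonneg.mp (nonneg_of_vecMul_nonpos hnegdef hoffdiag hlam' i)⟩

/-- Double application of Lemma 2.18(1): if `E` is symmetric negative definite with
nonnegative off-diagonal entries, and both `λ • E` and `(𝟙 - λ) • E` (as row vector
products) have all entries nonpositive, then `0 ≤ λᵢ ≤ 1` for every `i`. -/
theorem stmt_1 (n : ℕ) (hn : 1 ≤ n) (E : Matrix (Fin n) (Fin n) ℝ)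
    (hsymm : E.IsSymm)
    (hnegdef : ∀ x : Fin n → ℝ, x ≠ 0 → dotProduct x (E.mulVec x) < 0)
    (hoffdiag : ∀ i j : Fin n, i ≠ j → 0 ≤ E i j)
    (lam : Fin n → ℝ)
    (hlam : ∀ j : Fin n, Matrix.vecMul lam E j ≤ 0)
    (hlam' : ∀ j : Fin n, Matrix.vecMul (fun i => 1 - lam i) E j ≤ 0) :
    ∀ i : Fin n, 0 ≤ lam i ∧ lam i ≤ 1 :=
  stmt_1_general n E hnegdef hoffdiag lam hlam hlam'
end

section
/- Let n ≥ 1 and let c_1, …, c_n ∈ ℝ with c_i ≤ 0 for every 1 ≤ i ≤ n. Let A be the symmetric tridiagonal n×n matrix with diagonal entries A_{ii} = c_i − 2, with A_{i,i+1} = A_{i+1,i} = 1 for 1 ≤ i ≤ n−1, and with all other entries 0. Then there exists a row vector λ = (λ_1, …, λ_n) ∈ ℝⁿ such that λA = (c_1, c_2, …, c_{n−1}, c_n − 1), this λ is unique, and it satisfies 0 < λ_i < 1 for every 1 ≤ i ≤ n. -/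
/-!
Write `G` for the path graph on `Fin n` and `L` for its Laplacian. Then `A = -(L + diag r)` with
the potential `r j = 2 - c j - deg j ≥ 0`, and `λ A = b` says `(L + diag r) λ = -b`, while
`μ = 1 - λ` satisfies `(L + diag r) μ = r + b`. Both right-hand sides are nonnegative and nonzero,
so the minimum principle for `L + diag r` on the connected graph `G` gives `λ > 0` and `μ > 0`.
The same principle shows that `L + diag r` is injective, because `r > 0` at the first vertex;
hence `A` is invertible.
-/

open Finset Matrix

namespace SimpleGraph

variable {V : Type*} [Fintype V] [DecidableEq V] {G : SimpleGraph V} [DecidableRel G.Adj]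

theorem eq_of_adj_of_forall_le_of_lapMatrix_mulVec_nonneg {x : V → ℝ} {v w : V}
    (hv : ∀ u, x v ≤ x u) (hL : 0 ≤ (G.lapMatrix ℝ *ᵥ x) v) (hvw : G.Adj v w) : x w = x v := by
  have hsum : (G.lapMatrix ℝ *ᵥ x) v = ∑ u ∈ G.neighborFinset v, (x v - x u) := by
    rw [lapMatrix_mulVec_apply, sum_sub_distrib, sum_const, card_neighborFinset_eq_degree,
      nsmul_eq_mul]
  have hterms := (sum_eq_zero_iff_of_nonpos fun u _ => sub_nonpos.2 (hv u)).1
    (le_antisymm (sum_nonpos fun u _ => sub_nonpos.2 (hv u)) (hsum ▸ hL))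
  linarith [hterms w ((mem_neighborFinset G v w).2 hvw)]

theorem Preconnected.eq_of_forall_le_of_lapMatrix_mulVec_nonneg (hG : G.Preconnected)
    {x : V → ℝ} {v : V} (hv : ∀ u, x v ≤ x u)
    (hL : ∀ u, x u = x v → 0 ≤ (G.lapMatrix ℝ *ᵥ x) u) (w : V) : x w = x v := by
  have hwalk : ∀ {u}, G.Walk u w → x u = x v → x w = x v := by
    intro u p
    induction p with
    | nil => exact id
    | cons hadj _ ih =>
      exact fun hu => ih
        ((eq_of_adj_of_forall_le_of_lapMatrix_mulVec_nonneg (hu ▸ hv) (hL _ hu) hadj).trans hu)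
  exact hwalk (hG v w).some rfl

theorem Preconnected.forall_eq_of_mulVec_eq_of_nonpos (hG : G.Preconnected) {r f x : V → ℝ}
    (hr : 0 ≤ r) (hf : 0 ≤ f) (hx : (G.lapMatrix ℝ + diagonal r) *ᵥ x = f) {u : V}
    (hu : x u ≤ 0) (w : V) : x w = x u ∧ r w * x u = f w := by
  have hLx (w : V) : (G.lapMatrix ℝ *ᵥ x) w = f w - r w * x w := by
    rw [← hx, add_mulVec, Pi.add_apply, mulVec_diagonal]
    ring
  have : Nonempty V := ⟨u⟩
  obtain ⟨v, hv⟩ := Finite.exists_min x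
  have hconst : ∀ w, x w = x v := hG.eq_of_forall_le_of_lapMatrix_mulVec_nonneg hv fun w hw => by
    rw [hLx, sub_nonneg]
    exact (mul_nonpos_of_nonneg_of_nonpos (hr w) (hw ▸ (hv u).trans hu)).trans (hf w)
  have hL0 : G.lapMatrix ℝ *ᵥ x = 0 := (lapMatrix_mulVec_eq_zero_iff_forall_reachable G).2
    fun i j _ => (hconst i).trans (hconst j).symm
  refine ⟨(hconst w).trans (hconst u).symm, ?_⟩
  have := hLx w
  rw [hL0, hconst w, ← hconst u, Pi.zero_apply] at this
  linarith

theorem Preconnected.pos_of_mulVec_eq (hG : G.Preconnected) {r f x : V → ℝ} (hr : 0 ≤ r)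
    (hf : 0 ≤ f) {v₀ : V} (hf₀ : 0 < f v₀) (hx : (G.lapMatrix ℝ + diagonal r) *ᵥ x = f)
    (u : V) : 0 < x u := by
  by_contra! hu
  have := (hG.forall_eq_of_mulVec_eq_of_nonpos hr hf hx hu v₀).2
  linarith [mul_nonpos_of_nonneg_of_nonpos (hr v₀) hu]

theorem Preconnected.injective_mulVec (hG : G.Preconnected) {r : V → ℝ} (hr : 0 ≤ r)
    {v₀ : V} (hr₀ : 0 < r v₀) : Function.Injective (G.lapMatrix ℝ + diagonal r).mulVec := by
  have hnonneg (x : V → ℝ) (hx : (G.lapMatrix ℝ + diagonal r) *ᵥ x = 0) : 0 ≤ x := fun u => by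
    by_contra! hu
    have := (hG.forall_eq_of_mulVec_eq_of_nonpos hr le_rfl hx hu.le v₀).2
    rw [Pi.zero_apply] at hu this
    linarith [mul_neg_of_pos_of_neg hr₀ hu]
  intro x y hxy
  have hsub : (G.lapMatrix ℝ + diagonal r) *ᵥ (x - y) = 0 := by rw [mulVec_sub, hxy, sub_self]
  have hneg : (G.lapMatrix ℝ + diagonal r) *ᵥ (y - x) = 0 := by rw [mulVec_sub, hxy, sub_self]
  exact sub_eq_zero.1 (le_antisymm (by simpa using hnonneg _ hneg) (hnonneg _ hsub))

theorem vecMul_neg_lapMatrix_add_diagonal (r x : V → ℝ) :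
    x ᵥ* -(G.lapMatrix ℝ + diagonal r) = -((G.lapMatrix ℝ + diagonal r) *ᵥ x) := by
  rw [vecMul_neg, ← vecMul_transpose, ((isSymm_lapMatrix ℝ G).add (isSymm_diagonal r)).eq]

instance (n : ℕ) : DecidableRel (pathGraph n).Adj := fun _ _ => decidable_of_iff' _ pathGraph_adj

theorem pathGraph_degree_add_le {n : ℕ} (j : Fin n) :
    (pathGraph n).degree j + (if (j : ℕ) = 0 then 1 else 0) + (if (j : ℕ) = n - 1 then 1 else 0)
      ≤ 2 := by
  have hsub : (pathGraph n).neighborFinset j ⊆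
      ({i | (i : ℕ) + 1 = j} : Finset (Fin n)) ∪ ({i | (j : ℕ) + 1 = i} : Finset (Fin n)) := by
    intro i
    simp only [mem_neighborFinset, pathGraph_adj, mem_union, mem_filter, mem_univ, true_and]
    tauto
  have hleft : #{i : Fin n | (i : ℕ) + 1 = j} + (if (j : ℕ) = 0 then 1 else 0) ≤ 1 := by
    split_ifs with hj
    · rw [card_eq_zero.2 (filter_eq_empty_iff.2 fun i _ => by omega)]
    · rw [add_zero]
      exact card_le_one.2 fun a ha b hb => Fin.ext (by simp only [mem_filter] at ha hb; omega)
  have hright : #{i : Fin n | (j : ℕ) + 1 = i} + (if (j : ℕ) = n - 1 then 1 else 0) ≤ 1 := by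
    split_ifs with hj
    · rw [card_eq_zero.2 (filter_eq_empty_iff.2 fun i _ => by omega)]
    · rw [add_zero]
      exact card_le_one.2 fun a ha b hb => Fin.ext (by simp only [mem_filter] at ha hb; omega)
  have := (card_le_card hsub).trans (card_union_le _ _)
  rw [card_neighborFinset_eq_degree] at this
  omega

end SimpleGraph

open SimpleGraph

section PathGraph

variable {n : ℕ}

noncomputable def pathPotential (c : Fin n → ℝ) (j : Fin n) : ℝ :=
  2 - c j - (pathGraph n).degree j

theorem eq_neg_lapMatrix_add_diagonal_pathPotential {c : Fin n → ℝ}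
    {A : Matrix (Fin n) (Fin n) ℝ}
    (hA : ∀ i j : Fin n, A i j =
      if (i : ℕ) = (j : ℕ) then c i - 2
      else if (i : ℕ) + 1 = (j : ℕ) ∨ (j : ℕ) + 1 = (i : ℕ) then 1 else 0) :
    A = -((pathGraph n).lapMatrix ℝ + diagonal (pathPotential c)) := by
  ext i j
  rw [hA]
  by_cases h : i = j
  · subst h
    simp [lapMatrix, degMatrix, pathPotential]
  · simp [lapMatrix, degMatrix, adjMatrix_apply, pathGraph_adj, h, Fin.val_inj]

theorem pathGraph_degree_add_le_real (j : Fin n) :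
    ((pathGraph n).degree j : ℝ) + (if (j : ℕ) = 0 then 1 else 0)
      + (if (j : ℕ) = n - 1 then 1 else 0) ≤ 2 := by
  exact_mod_cast pathGraph_degree_add_le j

theorem pathPotential_nonneg {c : Fin n → ℝ} (hc : ∀ i, c i ≤ 0) : 0 ≤ pathPotential c :=
  fun j => by
    have := pathGraph_degree_add_le_real j
    rw [Pi.zero_apply, pathPotential]
    split_ifs at this <;> linarith [hc j]

theorem pathPotential_pos_of_val_eq_zero {c : Fin n → ℝ} (hc : ∀ i, c i ≤ 0) {j : Fin n}
    (hj : (j : ℕ) = 0) : 0 < pathPotential c j := by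
  have := pathGraph_degree_add_le_real j
  rw [if_pos hj] at this
  rw [pathPotential]
  split_ifs at this <;> linarith [hc j]

theorem pos_of_lapMatrix_add_diagonal_pathPotential_mulVec_eq_neg {c b lam : Fin n → ℝ}
    (hc : ∀ i, c i ≤ 0) (hb : ∀ i : Fin n, b i = if (i : ℕ) = n - 1 then c i - 1 else c i)
    (hlam : ((pathGraph n).lapMatrix ℝ + diagonal (pathPotential c)) *ᵥ lam = -b) (i : Fin n) :
    0 < lam i := by
  have hn := i.pos
  refine (pathGraph_preconnected n).pos_of_mulVec_eq (pathPotential_nonneg hc) (fun j => ?_)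
    (v₀ := ⟨n - 1, by omega⟩) ?_ hlam i
  · simp only [Pi.zero_apply, Pi.neg_apply, hb]
    split_ifs <;> linarith [hc j]
  · simp only [Pi.neg_apply, hb, if_pos]
    linarith [hc ⟨n - 1, by omega⟩]

theorem lt_one_of_lapMatrix_add_diagonal_pathPotential_mulVec_eq_neg {c b lam : Fin n → ℝ}
    (hc : ∀ i, c i ≤ 0) (hb : ∀ i : Fin n, b i = if (i : ℕ) = n - 1 then c i - 1 else c i)
    (hlam : ((pathGraph n).lapMatrix ℝ + diagonal (pathPotential c)) *ᵥ lam = -b) (i : Fin n) :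
    lam i < 1 := by
  have hn := i.pos
  set M := (pathGraph n).lapMatrix ℝ + diagonal (pathPotential c)
  have hM1 : M *ᵥ 1 = pathPotential c := by
    rw [add_mulVec, show (pathGraph n).lapMatrix ℝ *ᵥ 1 = 0 from
      lapMatrix_mulVec_const_eq_zero _, zero_add]
    exact funext fun j => by rw [mulVec_diagonal, Pi.one_apply, mul_one]
  have hMmu : M *ᵥ (1 - lam) = pathPotential c + b := by
    rw [mulVec_sub, hM1, hlam, sub_neg_eq_add]
  have := (pathGraph_preconnected n).pos_of_mulVec_eq (pathPotential_nonneg hc) (fun j => ?_)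
    (v₀ := ⟨0, by omega⟩) ?_ hMmu i
  · simpa using this
  · have := pathGraph_degree_add_le_real j
    simp only [Pi.zero_apply, Pi.add_apply, hb, pathPotential]
    split_ifs at * <;> linarith
  · have := pathGraph_degree_add_le_real (⟨0, by omega⟩ : Fin n)
    rw [if_pos rfl] at this
    rw [Pi.add_apply, hb, pathPotential]
    split_ifs at * <;> linarith

end PathGraph

/-- Linear-algebraic content of Lemma 3.5: with `c i ≤ 0`, `A` the symmetric
tridiagonal matrix with diagonal `c i - 2` and off-diagonal entries `1`, the system
`λ * A = (c 0, …, c (n-2), c (n-1) - 1)` has a unique solution `λ`, and this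
solution satisfies `0 < λ i < 1` for every `i`. -/
theorem stmt_5 (n : ℕ) (hn : 1 ≤ n) (c : Fin n → ℝ)
    (hc : ∀ i : Fin n, c i ≤ 0)
    (A : Matrix (Fin n) (Fin n) ℝ)
    (hA : ∀ i j : Fin n, A i j =
      if (i : ℕ) = (j : ℕ) then c i - 2
      else if (i : ℕ) + 1 = (j : ℕ) ∨ (j : ℕ) + 1 = (i : ℕ) then 1 else 0)
    (b : Fin n → ℝ)
    (hb : ∀ i : Fin n, b i = if (i : ℕ) = n - 1 then c i - 1 else c i) :
    (∃! lam : Fin n → ℝ, Matrix.vecMul lam A = b) ∧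
      (∀ lam : Fin n → ℝ, Matrix.vecMul lam A = b →
        ∀ i : Fin n, 0 < lam i ∧ lam i < 1) := by
  set M := (pathGraph n).lapMatrix ℝ + diagonal (pathPotential c)
  have hvecMul (x : Fin n → ℝ) : x ᵥ* A = -(M *ᵥ x) := by
    rw [eq_neg_lapMatrix_add_diagonal_pathPotential hA, vecMul_neg_lapMatrix_add_diagonal]
  have hinj : Function.Injective A.vecMul := fun x y hxy => by
    simp only [hvecMul, neg_inj] at hxy
    exact (pathGraph_preconnected n).injective_mulVec (pathPotential_nonneg hc)
      (pathPotential_pos_of_val_eq_zero hc (j := ⟨0, hn⟩) rfl) hxy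
  have hbij : Function.Bijective A.vecMul :=
    ⟨hinj, vecMul_surjective_iff_isUnit.2 (vecMul_injective_iff_isUnit.1 hinj)⟩
  refine ⟨hbij.existsUnique b, fun lam hlam i => ?_⟩
  have hMlam : M *ᵥ lam = -b := by rw [← hlam, hvecMul, neg_neg]
  exact ⟨pos_of_lapMatrix_add_diagonal_pathPotential_mulVec_eq_neg hc hb hMlam i,
    lt_one_of_lapMatrix_add_diagonal_pathPotential_mulVec_eq_neg hc hb hMlam i⟩
end
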